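/- Let k̃ > 0 be a constant, I ⊆ ℝ an open interval, and χ : I → ℝ a function with χ(π) ≠ π and π + 1 ≠ 0 for all π ∈ I. Let e, f : I → (0,∞) be differentiable with e'(π) = ψ(π)e(π) and f'(π) = φ(π)f(π), where ψ(π) := π/((χ(π)−π)(π+1)) and φ(π) := 1/(χ(π)−π). On U := {(ρ,p) ∈ ℝ² : ρ > 0 and p/ρ ∈ I}, setting π := p/ρ, define n := ρ/e(π), s := k̃·ln(f(π)/ρ), Θ := π·e(π)/k̃ and ε := e(π) − 1. Then on U: (i) p = k̃·n·Θ (the generic ideal gas equation of state); (ii) ρ = n(1+ε); (iii) ∂ρn + χ(π)·∂pn = n/(ρ+p); (iv) ∂ρs + χ(π)·∂ps = 0; (v) Θ·∂ρs = ∂ρε + p·∂ρ(1/n) and Θ·∂ps = ∂pε + p·∂p(1/n). -/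

import Mathlib

noncomputable section

/-- Partial derivative with respect to the first coordinate (the energy density ρ). -/
def pd1 (f : ℝ × ℝ → ℝ) (x y : ℝ) : ℝ := deriv (fun t => f (t, y)) x

/-- Partial derivative with respect to the second coordinate (the pressure p). -/
def pd2 (f : ℝ × ℝ → ℝ) (x y : ℝ) : ℝ := deriv (fun t => f (x, t)) y

/-!
With `π = p/ρ` one has `∂ρ π = -π/ρ` and `∂p π = 1/ρ`, so all quantities of the scheme have
explicit partial derivatives in terms of the logarithmic derivatives `ψ = e'/e` and `φ = f'/f`.
Matter conservation then reduces to `(χ - π) ψ (π + 1) = π`, entropy conservation to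
`(χ - π) φ = 1`, and the Gibbs relation, in both variables, to their consequence
`ψ (π + 1) = π φ`.
-/

section

variable {h e f : ℝ → ℝ} {h' ψ φ c k x y : ℝ}

theorem hasDerivAt_comp_ratio_fst (hh : HasDerivAt h h' (y / x)) (hx : x ≠ 0) :
    HasDerivAt (fun t => h (y / t)) (-(y / x) / x * h') x := by
  have hratio : HasDerivAt (fun t => y / t) (-(y / x) / x) x :=
    ((hasDerivAt_const x y).div (hasDerivAt_id' x) hx).congr_deriv (by simp; ring)
  exact (hh.comp x hratio).congr_deriv (mul_comm _ _)

theorem hasDerivAt_comp_ratio_snd (hh : HasDerivAt h h' (y / x)) :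
    HasDerivAt (fun t => h (t / x)) (h' / x) y :=
  (hh.comp y ((hasDerivAt_id y).div_const x)).congr_deriv (by simp [div_eq_mul_inv])

theorem pd1_comp_ratio (hh : HasDerivAt h h' (y / x)) (hx : x ≠ 0) :
    pd1 (fun q => h (q.2 / q.1)) x y = -(y / x) / x * h' :=
  (hasDerivAt_comp_ratio_fst hh hx).deriv

theorem pd2_comp_ratio (hh : HasDerivAt h h' (y / x)) :
    pd2 (fun q => h (q.2 / q.1)) x y = h' / x :=
  (hasDerivAt_comp_ratio_snd hh).deriv

section matterDensity

variable (he : HasDerivAt e (ψ * e (y / x)) (y / x)) (hx : x ≠ 0) (he0 : e (y / x) ≠ 0)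
include he hx he0

theorem pd1_matterDensity :
    pd1 (fun q => q.1 / e (q.2 / q.1)) x y = (1 + y / x * ψ) / e (y / x) := by
  refine HasDerivAt.deriv
    (((hasDerivAt_id' x).div (hasDerivAt_comp_ratio_fst he hx) he0).congr_deriv ?_)
  field_simp
  ring

theorem pd2_matterDensity :
    pd2 (fun q => q.1 / e (q.2 / q.1)) x y = -ψ / e (y / x) := by
  refine HasDerivAt.deriv
    (((hasDerivAt_const y x).div (hasDerivAt_comp_ratio_snd he) he0).congr_deriv ?_)
  field_simp
  ring

theorem pd1_specificVolume :
    pd1 (fun q => 1 / (q.1 / e (q.2 / q.1))) x y = -(1 + y / x * ψ) * e (y / x) / x ^ 2 := by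
  simp only [one_div_div]
  refine HasDerivAt.deriv
    (((hasDerivAt_comp_ratio_fst he hx).div (hasDerivAt_id' x) hx).congr_deriv ?_)
  field_simp
  ring

theorem pd2_specificVolume :
    pd2 (fun q => 1 / (q.1 / e (q.2 / q.1))) x y = ψ * e (y / x) / x ^ 2 := by
  simp only [one_div_div]
  refine HasDerivAt.deriv (((hasDerivAt_comp_ratio_snd he).div_const x).congr_deriv ?_)
  field_simp

end matterDensity

section entropy

variable (hf : HasDerivAt f (φ * f (y / x)) (y / x)) (hx : x ≠ 0) (hf0 : f (y / x) ≠ 0)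
include hf hx hf0

theorem pd1_entropy :
    pd1 (fun q => k * Real.log (f (q.2 / q.1) / q.1)) x y = -k * (1 + y / x * φ) / x := by
  refine HasDerivAt.deriv
    ((((hasDerivAt_comp_ratio_fst hf hx).div (hasDerivAt_id' x) hx).log
      (div_ne_zero hf0 hx)).const_mul k |>.congr_deriv ?_)
  simp only [Pi.div_apply]
  field_simp
  ring

theorem pd2_entropy :
    pd2 (fun q => k * Real.log (f (q.2 / q.1) / q.1)) x y = k * φ / x := by
  refine HasDerivAt.deriv
    ((((hasDerivAt_comp_ratio_snd hf).div_const x).log (div_ne_zero hf0 hx)).const_mul k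
      |>.congr_deriv ?_)
  field_simp

end entropy

theorem pd1_add_mul_pd2_matterDensity (he : HasDerivAt e (ψ * e (y / x)) (y / x)) (hx : x ≠ 0)
    (he0 : e (y / x) ≠ 0) (hπ : y / x + 1 ≠ 0) (hψ : (c - y / x) * ψ * (y / x + 1) = y / x) :
    pd1 (fun q => q.1 / e (q.2 / q.1)) x y + c * pd2 (fun q => q.1 / e (q.2 / q.1)) x y
      = x / e (y / x) / (x + y) := by
  have hxy : x + y ≠ 0 := by
    convert mul_ne_zero hx hπ using 1
    field_simp
    ring
  rw [pd1_matterDensity he hx he0, pd2_matterDensity he hx he0]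
  field_simp
  field_simp at hψ
  linear_combination -hψ

theorem pd1_add_mul_pd2_entropy (hf : HasDerivAt f (φ * f (y / x)) (y / x)) (hx : x ≠ 0)
    (hf0 : f (y / x) ≠ 0) (hφ : (c - y / x) * φ = 1) :
    pd1 (fun q => k * Real.log (f (q.2 / q.1) / q.1)) x y
      + c * pd2 (fun q => k * Real.log (f (q.2 / q.1) / q.1)) x y = 0 := by
  rw [pd1_entropy hf hx hf0, pd2_entropy hf hx hf0]
  field_simp
  field_simp at hφ
  linear_combination k * hφ

section gibbs

variable (he : HasDerivAt e (ψ * e (y / x)) (y / x)) (hf : HasDerivAt f (φ * f (y / x)) (y / x))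
  (hx : x ≠ 0) (he0 : e (y / x) ≠ 0) (hf0 : f (y / x) ≠ 0) (hk : k ≠ 0)
  (hψφ : ψ * (y / x + 1) = y / x * φ)
include he hf hx he0 hf0 hk hψφ

theorem gibbs_pd1 :
    y / x * e (y / x) / k * pd1 (fun q => k * Real.log (f (q.2 / q.1) / q.1)) x y
      = pd1 (fun q => e (q.2 / q.1) - 1) x y
        + y * pd1 (fun q => 1 / (q.1 / e (q.2 / q.1))) x y := by
  rw [pd1_entropy hf hx hf0, pd1_specificVolume he hx he0,
    pd1_comp_ratio (h := fun π => e π - 1) (he.sub_const 1) hx]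
  field_simp
  field_simp at hψφ
  linear_combination y * hψφ

theorem gibbs_pd2 :
    y / x * e (y / x) / k * pd2 (fun q => k * Real.log (f (q.2 / q.1) / q.1)) x y
      = pd2 (fun q => e (q.2 / q.1) - 1) x y
        + y * pd2 (fun q => 1 / (q.1 / e (q.2 / q.1))) x y := by
  rw [pd2_entropy hf hx hf0, pd2_specificVolume he hx he0,
    pd2_comp_ratio (h := fun π => e π - 1) (he.sub_const 1)]
  field_simp
  field_simp at hψφ
  linear_combination -hψφ

end gibbs

end

theorem generic_ideal_gas_scheme
    (ktilde : ℝ) (hk : 0 < ktilde)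
    (I : Set ℝ)
    (χ e f : ℝ → ℝ)
    (hχ : ∀ π ∈ I, χ π ≠ π ∧ π + 1 ≠ 0)
    (he : ∀ π ∈ I, 0 < e π ∧ DifferentiableAt ℝ e π ∧
      deriv e π = (π / ((χ π - π) * (π + 1))) * e π)
    (hf : ∀ π ∈ I, 0 < f π ∧ DifferentiableAt ℝ f π ∧
      deriv f π = (1 / (χ π - π)) * f π) :
    ∀ x y : ℝ, 0 < x → y / x ∈ I →
      (y = ktilde * (x / e (y / x)) * (y / x * e (y / x) / ktilde))
      ∧ (x = x / e (y / x) * (1 + (e (y / x) - 1)))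
      ∧ (pd1 (fun q => q.1 / e (q.2 / q.1)) x y
            + χ (y / x) * pd2 (fun q => q.1 / e (q.2 / q.1)) x y
          = (x / e (y / x)) / (x + y))
      ∧ (pd1 (fun q => ktilde * Real.log (f (q.2 / q.1) / q.1)) x y
            + χ (y / x) * pd2 (fun q => ktilde * Real.log (f (q.2 / q.1) / q.1)) x y = 0)
      ∧ (y / x * e (y / x) / ktilde
            * pd1 (fun q => ktilde * Real.log (f (q.2 / q.1) / q.1)) x y
          = pd1 (fun q => e (q.2 / q.1) - 1) x y
            + y * pd1 (fun q => 1 / (q.1 / e (q.2 / q.1))) x y)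
      ∧ (y / x * e (y / x) / ktilde
            * pd2 (fun q => ktilde * Real.log (f (q.2 / q.1) / q.1)) x y
          = pd2 (fun q => e (q.2 / q.1) - 1) x y
            + y * pd2 (fun q => 1 / (q.1 / e (q.2 / q.1))) x y) := by
  intro x y hx hI
  obtain ⟨hχne, hπ⟩ := hχ _ hI
  have hχπ : χ (y / x) - y / x ≠ 0 := sub_ne_zero.mpr hχne
  obtain ⟨he0, hediff, hederiv⟩ := he _ hI
  obtain ⟨hf0, hfdiff, hfderiv⟩ := hf _ hI
  have hE := hederiv ▸ hediff.hasDerivAt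
  have hF := hfderiv ▸ hfdiff.hasDerivAt
  refine ⟨by field_simp, by rw [add_sub_cancel, div_mul_cancel₀ _ he0.ne'], ?_, ?_, ?_, ?_⟩
  -- with `π = y / x` generalized, `field_simp` needs only `χ π - π ≠ 0` and `π + 1 ≠ 0`
  · exact pd1_add_mul_pd2_matterDensity hE hx.ne' he0.ne' hπ
      (by generalize y / x = π at *; field_simp)
  · exact pd1_add_mul_pd2_entropy hF hx.ne' hf0.ne' (by generalize y / x = π at *; field_simp)
  · exact gibbs_pd1 hE hF hx.ne' he0.ne' hf0.ne' hk.ne' (by generalize y / x = π at *; field_simp)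
  · exact gibbs_pd2 hE hF hx.ne' he0.ne' hf0.ne' hk.ne' (by generalize y / x = π at *; field_simp)
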